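/- arXiv:0912.4342 — 2 statements merged into one kernel-verified Lean document; each statement's English description precedes it below -/
import Mathlib

section
/- Let m,n ≥ 1 and a,b ≥ 3 be integers with (m,n) ≠ (1,1). Let N(m,n;a,b) = C(m+a,a)·C(n+b,b). Let s be an integer with 1 ≤ s ≤ ⌈N(m,n;a,b)/(m+n+1)⌉, and let s' and ε be the quotient and remainder when dividing s(m+n+1) − N(m,n;a−1,b) by m+n (so 0 ≤ ε ≤ m+n−1). Then (s − s' − ε)(m+n+1) ≥ N(m,n;a−2,b). -/
theorem two_c2' (k : ℕ) : 2 * Nat.choose (k+1) 2 = k*(k+1) := by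
  induction k with
  | zero => rfl
  | succ k ih =>
    rw [Nat.choose_succ_succ (k+1) 1, Nat.choose_one_right, Nat.mul_add, ih]; ring

theorem six_c3' (k : ℕ) : 6 * Nat.choose (k+2) 3 = k*(k+1)*(k+2) := by
  induction k with
  | zero => rfl
  | succ k ih =>
    rw [Nat.choose_succ_succ (k+2) 2, Nat.mul_add, ih,
      show (6:ℕ) = 3*2 from rfl, Nat.mul_assoc, two_c2']; ring

theorem csymm' (n b : ℕ) : Nat.choose (n+b) n = Nat.choose (n+b) b := by
  have := Nat.choose_symm (Nat.le_add_left b n)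
  rwa [Nat.add_sub_cancel] at this

theorem Qmono' (n b : ℕ) (hb : 3 ≤ b) : Nat.choose (n+3) 3 ≤ Nat.choose (n+b) b := by
  rw [← csymm' n b, ← csymm' n 3]
  exact Nat.choose_le_choose n (by omega)

theorem chsucc (N j : ℕ) : Nat.choose N (j+1) ≤ Nat.choose N j * (N - j) := by
  calc Nat.choose N (j+1) ≤ Nat.choose N (j+1) * (j+1) :=
        Nat.le_mul_of_pos_right _ (Nat.succ_pos j)
  _ = Nat.choose N j * (N - j) := Nat.choose_succ_right_eq N j

theorem gmono' (m n c : ℕ) (hn : 1 ≤ n) :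
    ((m:ℤ)+n-1) * (Nat.choose (m+1) 2 : ℕ) - ((Nat.choose (m+1) 3 : ℕ) : ℤ)
      ≤ ((m:ℤ)+n-1) * (Nat.choose (m+c+1) (c+2) : ℕ) - ((Nat.choose (m+c+1) (c+3) : ℕ) : ℤ) := by
  induction c with
  | zero => simp
  | succ c ih =>
    refine ih.trans ?_
    have pas1 : Nat.choose (m+(c+1)+1) (c+1+2)
        = Nat.choose (m+c+1) (c+2) + Nat.choose (m+c+1) (c+3) := by
      rw [show m+(c+1)+1 = (m+c+1)+1 from by omega]
      exact Nat.choose_succ_succ (m+c+1) (c+2)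
    have pas2 : Nat.choose (m+(c+1)+1) (c+1+3)
        = Nat.choose (m+c+1) (c+3) + Nat.choose (m+c+1) (c+4) := by
      rw [show m+(c+1)+1 = (m+c+1)+1 from by omega]
      exact Nat.choose_succ_succ (m+c+1) (c+3)
    have hD : Nat.choose (m+c+1) (c+4) ≤ Nat.choose (m+c+1) (c+3) * m := by
      calc Nat.choose (m+c+1) (c+4) ≤ Nat.choose (m+c+1) (c+3) * (m+c+1 - (c+3)) :=
            chsucc (m+c+1) (c+3)
      _ ≤ Nat.choose (m+c+1) (c+3) * m := Nat.mul_le_mul_left _ (by omega)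
    have hDz : ((Nat.choose (m+c+1) (c+4) : ℕ) : ℤ)
        ≤ ((m:ℤ)+n-1) * (Nat.choose (m+c+1) (c+3) : ℕ) := by
      have h1 : ((Nat.choose (m+c+1) (c+4) : ℕ) : ℤ)
          ≤ ((Nat.choose (m+c+1) (c+3) : ℕ) : ℤ) * m := by exact_mod_cast hD
      have h2 : ((Nat.choose (m+c+1) (c+3) : ℕ) : ℤ) * (m:ℤ)
          ≤ ((Nat.choose (m+c+1) (c+3) : ℕ) : ℤ) * ((m:ℤ)+n-1) := by
        apply mul_le_mul_of_nonneg_left (by push_cast; omega) (by positivity)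
      linarith
    rw [pas1, pas2]
    push_cast
    linarith

theorem base' (m n : ℕ) (hm : 1 ≤ m) (hn : 1 ≤ n) (h3 : 3 ≤ m+n) :
    ((m:ℤ)+n+1)*((m:ℤ)+n-1)^2 + ((m:ℤ)+n)
      ≤ ((Nat.choose (n+3) 3 : ℕ) : ℤ)
          * (((m:ℤ)+n-1) * (Nat.choose (m+1) 2 : ℕ) - ((Nat.choose (m+1) 3 : ℕ) : ℤ)) := by
  obtain ⟨p, rfl⟩ : ∃ p, m = p + 1 := ⟨m-1, by omega⟩
  obtain ⟨q, rfl⟩ : ∃ q, n = q + 1 := ⟨n-1, by omega⟩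
  rw [show p+1+1 = p+2 from by omega, show q+1+3 = q+4 from by omega]
  have e2 : (2:ℤ) * (Nat.choose (p+2) 2 : ℕ) = ((p:ℤ)+1)*((p:ℤ)+2) := by
    exact_mod_cast congrArg (Nat.cast : ℕ → ℤ) (two_c2' (p+1))
  have e3 : (6:ℤ) * (Nat.choose (p+2) 3 : ℕ) = (p:ℤ)*((p:ℤ)+1)*((p:ℤ)+2) := by
    exact_mod_cast congrArg (Nat.cast : ℕ → ℤ) (six_c3' p)
  have e4 : (6:ℤ) * (Nat.choose (q+4) 3 : ℕ) = ((q:ℤ)+2)*((q:ℤ)+3)*((q:ℤ)+4) := by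
    exact_mod_cast congrArg (Nat.cast : ℕ → ℤ) (six_c3' (q+2))
  have hp : (0:ℤ) ≤ (p:ℤ) := by positivity
  have hq : (0:ℤ) ≤ (q:ℤ) := by positivity
  have hpq : (1:ℤ) ≤ (p:ℤ) + q := by push_cast; omega
  have poly : ((q:ℤ)+2)*((q:ℤ)+3)*((q:ℤ)+4)*(((p:ℤ)+2)*((p:ℤ)+1))*(2*(p:ℤ)+3*(q:ℤ)+3)
      ≥ 36*(((p:ℤ)+q+3)*((p:ℤ)+q+1)^2 + ((p:ℤ)+q+2)) := by
    nlinarith [mul_nonneg hp hq, mul_nonneg (mul_nonneg hp hp) hq,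
      mul_nonneg (mul_nonneg hp hq) hq, mul_nonneg (mul_nonneg (mul_nonneg hp hp) hq) hq,
      mul_nonneg (mul_nonneg (mul_nonneg hp hp) hp) hq,
      mul_nonneg (mul_nonneg (mul_nonneg hp hq) hq) hq, sq_nonneg ((p:ℤ)+q-1),
      mul_nonneg hp (sub_nonneg.2 hpq), mul_nonneg hq (sub_nonneg.2 hpq)]
  have heq : 36 * (((Nat.choose (q+4) 3 : ℕ) : ℤ)
        * ((((p:ℤ)+1)+((q:ℤ)+1)-1) * (Nat.choose (p+2) 2 : ℕ) - ((Nat.choose (p+2) 3 : ℕ) : ℤ)))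
      = ((q:ℤ)+2)*((q:ℤ)+3)*((q:ℤ)+4)*(((p:ℤ)+2)*((p:ℤ)+1))*(2*(p:ℤ)+3*(q:ℤ)+3) := by
    linear_combination (6*((p:ℤ)+q+1)*((Nat.choose (p+2) 2 : ℕ):ℤ)
        - 6*((Nat.choose (p+2) 3 : ℕ):ℤ)) * e4
      + 3*((p:ℤ)+q+1)*(((q:ℤ)+2)*((q:ℤ)+3)*((q:ℤ)+4)) * e2
      - (((q:ℤ)+2)*((q:ℤ)+3)*((q:ℤ)+4)) * e3
  push_cast
  push_cast at heq
  linarith [heq, poly]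

theorem key' (m n c b : ℕ) (hm : 1 ≤ m) (hn : 1 ≤ n) (h3 : 3 ≤ m + n) (hb : 3 ≤ b) :
    ((Nat.choose (m+c+3) (c+3) * Nat.choose (n+b) b : ℕ) : ℤ)
      + ((m:ℤ)+n) * ((Nat.choose (m+c+1) (c+1) * Nat.choose (n+b) b : ℕ) : ℤ)
      + ((m:ℤ)+n+1) * ((m:ℤ)+n-1)^2 + ((m:ℤ)+n)
    ≤ ((m:ℤ)+n+1) * ((Nat.choose (m+c+2) (c+2) * Nat.choose (n+b) b : ℕ) : ℤ) := by
  have pA0 : Nat.choose (m+c+3) (c+3)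
      = Nat.choose (m+c+2) (c+2) + Nat.choose (m+c+2) (c+3) := by
    rw [show m+c+3 = (m+c+2)+1 from by omega]; exact Nat.choose_succ_succ (m+c+2) (c+2)
  have pA1 : Nat.choose (m+c+2) (c+2)
      = Nat.choose (m+c+1) (c+1) + Nat.choose (m+c+1) (c+2) := by
    rw [show m+c+2 = (m+c+1)+1 from by omega]; exact Nat.choose_succ_succ (m+c+1) (c+1)
  have pB1 : Nat.choose (m+c+2) (c+3)
      = Nat.choose (m+c+1) (c+2) + Nat.choose (m+c+1) (c+3) := by
    rw [show m+c+2 = (m+c+1)+1 from by omega]; exact Nat.choose_succ_succ (m+c+1) (c+2)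
  have hbase := base' m n hm hn h3
  have hg := gmono' m n c hn
  have hQ : ((Nat.choose (n+3) 3 : ℕ) : ℤ) ≤ ((Nat.choose (n+b) b : ℕ) : ℤ) := by
    exact_mod_cast Qmono' n b hb
  have hQ3pos : (0:ℤ) < ((Nat.choose (n+3) 3 : ℕ) : ℤ) := by
    exact_mod_cast Nat.choose_pos (by omega : 3 ≤ n+3)
  have hg0 : (0:ℤ) ≤ ((m:ℤ)+n-1) * (Nat.choose (m+1) 2 : ℕ) - ((Nat.choose (m+1) 3 : ℕ) : ℤ) := by
    nlinarith [hbase, hQ3pos, sq_nonneg ((m:ℤ)+n-1)]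
  have c1 : ((Nat.choose (n+3) 3 : ℕ) : ℤ)
        * (((m:ℤ)+n-1) * (Nat.choose (m+1) 2 : ℕ) - ((Nat.choose (m+1) 3 : ℕ) : ℤ))
      ≤ ((Nat.choose (n+b) b : ℕ) : ℤ)
        * (((m:ℤ)+n-1) * (Nat.choose (m+1) 2 : ℕ) - ((Nat.choose (m+1) 3 : ℕ) : ℤ)) :=
    mul_le_mul_of_nonneg_right hQ hg0
  have c2 : ((Nat.choose (n+b) b : ℕ) : ℤ)
        * (((m:ℤ)+n-1) * (Nat.choose (m+1) 2 : ℕ) - ((Nat.choose (m+1) 3 : ℕ) : ℤ))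
      ≤ ((Nat.choose (n+b) b : ℕ) : ℤ)
        * (((m:ℤ)+n-1) * (Nat.choose (m+c+1) (c+2) : ℕ) - ((Nat.choose (m+c+1) (c+3) : ℕ) : ℤ)) :=
    mul_le_mul_of_nonneg_left hg (by positivity)
  rw [pA0, pA1, pB1]
  push_cast
  nlinarith [hbase, c1, c2]

/-- Superabundance of the triple (m,n; a-2,b; s-s'-ε). -/
theorem stmt_0 (m n a b : ℕ) (s s' ε : ℤ)
    (hm : 1 ≤ m) (hn : 1 ≤ n) (ha : 3 ≤ a) (hb : 3 ≤ b)
    (hmn : ¬(m = 1 ∧ n = 1))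
    (hs1 : 1 ≤ s)
    (hs2 : s ≤ ((Nat.choose (m + a) a * Nat.choose (n + b) b + m + n) / (m + n + 1) : ℕ))
    (hdiv : s * (m + n + 1)
        - ((Nat.choose (m + (a - 1)) (a - 1) * Nat.choose (n + b) b : ℕ) : ℤ)
        = s' * (m + n) + ε)
    (hε0 : 0 ≤ ε) (hε1 : ε ≤ (m : ℤ) + n - 1) :
    (s - s' - ε) * ((m : ℤ) + n + 1)
      ≥ ((Nat.choose (m + (a - 2)) (a - 2) * Nat.choose (n + b) b : ℕ) : ℤ) := by
  obtain ⟨c, rfl⟩ : ∃ c, a = c + 3 := ⟨a - 3, by omega⟩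
  have h3 : 3 ≤ m + n := by omega
  rw [show c+3-1 = c+2 from by omega, show c+3-2 = c+1 from by omega] at *
  rw [show m+(c+3) = m+c+3 from by omega, show m+(c+2) = m+c+2 from by omega,
    show m+(c+1) = m+c+1 from by omega] at *
  have hkey := key' m n c b hm hn h3 hb
  -- upper bound on s
  have hsu : s * ((m:ℤ)+n+1) ≤ ((Nat.choose (m+c+3) (c+3) * Nat.choose (n+b) b : ℕ) : ℤ) + m + n := by
    have hdm := Nat.div_mul_le_self (Nat.choose (m+c+3) (c+3) * Nat.choose (n+b) b + m + n) (m+n+1)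
    have h1 : s * ((m:ℤ)+n+1)
        ≤ (((Nat.choose (m+c+3) (c+3) * Nat.choose (n+b) b + m + n) / (m+n+1) : ℕ) : ℤ) * ((m:ℤ)+n+1) := by
      apply mul_le_mul_of_nonneg_right hs2 (by positivity)
    have h2 : (((Nat.choose (m+c+3) (c+3) * Nat.choose (n+b) b + m + n) / (m+n+1) : ℕ) : ℤ) * ((m:ℤ)+n+1)
        ≤ ((Nat.choose (m+c+3) (c+3) * Nat.choose (n+b) b : ℕ) : ℤ) + m + n := by
      push_cast
      exact_mod_cast hdm
    linarith
  have hε2 : ((m:ℤ)+n-1) * ε ≤ ((m:ℤ)+n-1)^2 := by nlinarith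
  have hε3 : ((m:ℤ)+n-1) * ε * ((m:ℤ)+n+1) ≤ ((m:ℤ)+n-1)^2 * ((m:ℤ)+n+1) :=
    mul_le_mul_of_nonneg_right hε2 (by positivity)
  have hexp : ((m:ℤ)+n) * ((s - s' - ε) * ((m:ℤ)+n+1))
      = (((Nat.choose (m+c+2) (c+2) * Nat.choose (n+b) b : ℕ) : ℤ) - s - ((m:ℤ)+n-1)*ε)
        * ((m:ℤ)+n+1) := by linear_combination ((m:ℤ)+n+1) * hdiv
  have hMpos : (0:ℤ) < (m:ℤ)+n := by push_cast; omega
  have hfin : ((m:ℤ)+n) * (((Nat.choose (m+c+1) (c+1) * Nat.choose (n+b) b : ℕ) : ℤ))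
      ≤ ((m:ℤ)+n) * ((s - s' - ε) * ((m:ℤ)+n+1)) := by
    rw [hexp]; nlinarith [hkey, hsu, hε3]
  exact le_of_mul_le_mul_left hfin hMpos
end

section
/- Let a ≥ 3 and b,m,n ≥ 1 be integers, and suppose b ≥ 3. Let N(m,n;a,b) = C(m+a,a)·C(n+b,b) and let s ≥ ⌊N(m,n;a,b)/(m+n+1)⌋. Let s' and ε be the quotient and remainder when dividing s(m+n+1) − N(m,n;a−1,b) by m+n. Then s' ≥ ε. -/
lemma c2 (m : ℕ) : (m+1).choose 2 * 2 = m*(m+1) := by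
  induction m with
  | zero => rfl
  | succ k ih =>
    rw [Nat.choose_succ_succ (k+1) 1]
    simp [Nat.choose_one_right]
    nlinarith [ih]

lemma c3 (m : ℕ) : (m+2).choose 3 * 6 = m*(m+1)*(m+2) := by
  induction m with
  | zero => rfl
  | succ k ih =>
    rw [Nat.choose_succ_succ (k+2) 2]
    nlinarith [ih, c2 (k+1)]

lemma poly_lb (x y : ℕ) :
    36 * (x+1+(y+1))^2 ≤ (x+1)*(x+2)*(x+3) * ((y+2)*(y+3)*(y+4)) := by
  have hx : (x+1)*(x+2)*3 ≤ (x+1)*(x+2)*(x+3) :=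
    Nat.mul_le_mul_left _ (by omega)
  have hy : (y+2)*(6*(y+2)) ≤ (y+2)*((y+3)*(y+4)) :=
    Nat.mul_le_mul_left _ (by nlinarith)
  have h1 : ((x+1)*(x+2)*3) * ((y+2)*(6*(y+2))) ≤ (x+1)*(x+2)*(x+3) * ((y+2)*((y+3)*(y+4))) :=
    Nat.mul_le_mul hx hy
  have h2 : 36 * (x+1+(y+1))^2 ≤ ((x+1)*(x+2)*3) * ((y+2)*(6*(y+2))) := by
    nlinarith [Nat.zero_le (x*x*y*y), Nat.zero_le (x*x*y), Nat.zero_le (x*y*y), Nat.zero_le (x*y)]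
  calc 36 * (x+1+(y+1))^2 ≤ _ := h2
    _ ≤ _ := h1
    _ = (x+1)*(x+2)*(x+3) * ((y+2)*(y+3)*(y+4)) := by ring

lemma prod_lb (m n : ℕ) (hm : 1 ≤ m) (hn : 1 ≤ n) :
    (m+n)^2 ≤ (m+2).choose 3 * (n+3).choose 3 := by
  obtain ⟨x, rfl⟩ : ∃ x, m = x + 1 := ⟨m - 1, by omega⟩
  obtain ⟨y, rfl⟩ : ∃ y, n = y + 1 := ⟨n - 1, by omega⟩
  have h1 := c3 (x+1)
  have h2 := c3 (y+2)
  have key := poly_lb x y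
  nlinarith [h1, h2, key]

/-- If a,b ≥ 3 and s ≥ ⌊N(m,n;a,b)/(m+n+1)⌋ then the quotient s' dominates the
remainder ε in the division of s(m+n+1) − N(m,n;a−1,b) by m+n. -/
theorem stmt_1 (m n a b : ℕ) (s s' ε : ℤ)
    (hm : 1 ≤ m) (hn : 1 ≤ n) (ha : 3 ≤ a) (hb : 3 ≤ b)
    (hs : ((Nat.choose (m + a) a * Nat.choose (n + b) b / (m + n + 1) : ℕ) : ℤ) ≤ s)
    (hdiv : s * (m + n + 1)
        - ((Nat.choose (m + (a - 1)) (a - 1) * Nat.choose (n + b) b : ℕ) : ℤ)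
        = s' * (m + n) + ε)
    (hε0 : 0 ≤ ε) (hε1 : ε ≤ (m : ℤ) + n - 1) :
    ε ≤ s' := by
  obtain ⟨a', rfl⟩ : ∃ a', a = a' + 1 := ⟨a - 1, by omega⟩
  have hsimp : a' + 1 - 1 = a' := rfl
  rw [hsimp] at hdiv
  -- Pascal
  have hpascal : Nat.choose (m + (a'+1)) (a'+1)
      = Nat.choose (m+a') a' + Nat.choose (m+a') (a'+1) := by
    rw [show m + (a'+1) = (m+a') + 1 by ring, Nat.choose_succ_succ]
  -- binomial lower bounds
  have h1 : Nat.choose (m+2) 3 ≤ Nat.choose (m+a') (a'+1) := by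
    have e1 : Nat.choose (m+2) 3 = Nat.choose (m+2) (m-1) :=
      Nat.choose_symm_of_eq_add (by omega)
    have e2 : Nat.choose (m+a') (a'+1) = Nat.choose (m+a') (m-1) :=
      Nat.choose_symm_of_eq_add (by omega)
    rw [e1, e2]
    exact Nat.choose_le_choose _ (by omega)
  have h2 : Nat.choose (n+3) 3 ≤ Nat.choose (n+b) b := by
    have e1 : Nat.choose (n+3) 3 = Nat.choose (n+3) n :=
      Nat.choose_symm_of_eq_add (by omega)
    have e2 : Nat.choose (n+b) b = Nat.choose (n+b) n :=
      Nat.choose_symm_of_eq_add (by omega)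
    rw [e1, e2]
    exact Nat.choose_le_choose _ (by omega)
  have hprod : (m+n)^2 ≤ Nat.choose (m+a') (a'+1) * Nat.choose (n+b) b :=
    le_trans (prod_lb m n hm hn) (Nat.mul_le_mul h1 h2)
  have hprodZ : ((m:ℤ)+n)^2 ≤ ((Nat.choose (m+a') (a'+1) : ℕ) : ℤ) * ((Nat.choose (n+b) b : ℕ) : ℤ) := by
    exact_mod_cast hprod
  -- floor division bound: N - (m+n) ≤ s*(m+n+1)
  have hfloor : ((Nat.choose (m + (a'+1)) (a'+1) * Nat.choose (n + b) b : ℕ) : ℤ) - ((m:ℤ)+n)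
      ≤ s * ((m:ℤ) + n + 1) := by
    set N : ℕ := Nat.choose (m + (a'+1)) (a'+1) * Nat.choose (n + b) b with hNdef
    have hmod := Nat.div_add_mod N (m+n+1)
    have hmodlt : N % (m+n+1) < m+n+1 := Nat.mod_lt _ (by omega)
    have hcast : (N : ℤ) = ((m:ℤ)+n+1) * ((N / (m+n+1) : ℕ) : ℤ) + ((N % (m+n+1) : ℕ) : ℤ) := by
      exact_mod_cast hmod.symm
    have hc : ((N % (m+n+1) : ℕ) : ℤ) ≤ (m : ℤ) + n := by
      have : N % (m+n+1) ≤ m + n := by omega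
      exact_mod_cast this
    have hmul : ((N / (m+n+1) : ℕ) : ℤ) * ((m:ℤ)+n+1) ≤ s * ((m:ℤ)+n+1) :=
      mul_le_mul_of_nonneg_right hs (by positivity)
    linarith [hmul, hcast, hc]
  -- combine
  have hNsplit : ((Nat.choose (m + (a'+1)) (a'+1) * Nat.choose (n + b) b : ℕ) : ℤ)
      = ((Nat.choose (m + a') a' * Nat.choose (n + b) b : ℕ) : ℤ)
      + ((Nat.choose (m+a') (a'+1) : ℕ) : ℤ) * ((Nat.choose (n+b) b : ℕ) : ℤ) := by
    rw [hpascal]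
    push_cast
    ring
  have hD : ((m:ℤ)+n)^2 - ((m:ℤ)+n) ≤ s' * ((m:ℤ) + n) + ε := by
    have := hdiv
    push_cast at this ⊢
    push_cast at hfloor hNsplit
    linarith [hprodZ, hfloor, hNsplit, this]
  -- final step
  by_contra hlt
  push_neg at hlt
  have hk : (2 : ℤ) ≤ (m : ℤ) + n := by
    have h1 : (1:ℤ) ≤ (m:ℤ) := by exact_mod_cast hm
    have h2 : (1:ℤ) ≤ (n:ℤ) := by exact_mod_cast hn
    linarith
  have h5 : s' ≤ ε - 1 := by omega
  nlinarith [mul_le_mul_of_nonneg_right h5 (by linarith : (0:ℤ) ≤ (m:ℤ)+n), hD, hε1, hk,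
    mul_le_mul_of_nonneg_left hε1 (by linarith : (0:ℤ) ≤ (m:ℤ)+n)]
end
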